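/- With the notation below, assume k₇ = k₈ = k₉ = k₁₀ = 0. Then the Lie brackets of horizontal vector fields [δ_t, δ_θ], [δ_r, δ_θ], [δ_t, δ_φ], and [δ_r, δ_φ] all vanish identically on the domain. -/

import Mathlib

noncomputable section

abbrev Pt : Type := Fin 8 → ℝ

def hIdx (a : Fin 4) : Fin 8 := ⟨a.val, by omega⟩
def vIdx (a : Fin 4) : Fin 8 := ⟨a.val + 4, by omega⟩

structure ConnData where
  k1 : ℝ × ℝ → ℝ
  k2 : ℝ × ℝ → ℝ
  k3 : ℝ × ℝ → ℝ
  k4 : ℝ × ℝ → ℝ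
  k5 : ℝ × ℝ → ℝ
  k6 : ℝ × ℝ → ℝ
  k7 : ℝ × ℝ → ℝ
  k8 : ℝ × ℝ → ℝ
  k9 : ℝ × ℝ → ℝ
  k10 : ℝ × ℝ → ℝ

def ConnData.Smooth (D : ConnData) : Prop :=
  ContDiff ℝ (⊤ : ℕ∞) D.k1 ∧ ContDiff ℝ (⊤ : ℕ∞) D.k2 ∧ ContDiff ℝ (⊤ : ℕ∞) D.k3 ∧ ContDiff ℝ (⊤ : ℕ∞) D.k4 ∧
  ContDiff ℝ (⊤ : ℕ∞) D.k5 ∧ ContDiff ℝ (⊤ : ℕ∞) D.k6 ∧ ContDiff ℝ (⊤ : ℕ∞) D.k7 ∧ ContDiff ℝ (⊤ : ℕ∞) D.k8 ∧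
  ContDiff ℝ (⊤ : ℕ∞) D.k9 ∧ ContDiff ℝ (⊤ : ℕ∞) D.k10

/-- Christoffel symbols: `Γmat D p c a b` is `Γ^c_{ab}` at the point `p`. -/
def Γmat (D : ConnData) (p : Pt) : Fin 4 → Matrix (Fin 4) (Fin 4) ℝ :=
  let x : ℝ × ℝ := (p 0, p 1)
  let s : ℝ := Real.sin (p 2)
  let co : ℝ := Real.cos (p 2)
  ![!![D.k1 x, D.k2 x, 0, 0;
      D.k2 x, D.k3 x, 0, 0;
      0, 0, D.k7 x, 0;
      0, 0, 0, D.k7 x * s ^ 2],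
    !![D.k4 x, D.k6 x, 0, 0;
      D.k6 x, D.k5 x, 0, 0;
      0, 0, D.k10 x, 0;
      0, 0, 0, D.k10 x * s ^ 2],
    !![0, 0, D.k8 x, 0;
      0, 0, D.k9 x, 0;
      D.k8 x, D.k9 x, 0, 0;
      0, 0, 0, -(s * co)],
    !![0, 0, 0, D.k8 x;
      0, 0, 0, D.k9 x;
      0, 0, 0, co / s;
      D.k8 x, D.k9 x, co / s, 0]]

/-- `N^c_a = Σ_b Γ^c_{ab} ẋ^b`. -/
def Ncoef (D : ConnData) (c a : Fin 4) (p : Pt) : ℝ :=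
  ∑ b : Fin 4, Γmat D p c a b * p (vIdx b)

/-- The horizontal vector field `δ_a` evaluated at `p`. -/
def δvf (D : ConnData) (a : Fin 4) (p : Pt) : Pt :=
  Pi.single (hIdx a) 1 - ∑ c : Fin 4, Pi.single (vIdx c) (Ncoef D c a p)

/-- `δ_a` acting as a derivation on functions. -/
def δd (D : ConnData) (a : Fin 4) (f : Pt → ℝ) (p : Pt) : ℝ :=
  fderiv ℝ f p (δvf D a p)

/-- Vertical partial derivative `∂̇_a`. -/
def vd (a : Fin 4) (f : Pt → ℝ) (p : Pt) : ℝ :=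
  fderiv ℝ f p (Pi.single (vIdx a) 1)

/-- Curvature `R^c_{ab} = δ_b(N^c_a) - δ_a(N^c_b)`. -/
def Rcurv (D : ConnData) (c a b : Fin 4) (p : Pt) : ℝ :=
  δd D b (Ncoef D c a) p - δd D a (Ncoef D c b) p

/-- Connection Ricci tensor `Ric_{bc} = Σ_a ∂̇_b (R^a_{ca})`. -/
def Ric (D : ConnData) (b c : Fin 4) (p : Pt) : ℝ :=
  ∑ a : Fin 4, vd b (Rcurv D a c a) p

/-- Lie bracket of vector fields on `ℝ⁸`. -/
def lie (X Y : Pt → Pt) (p : Pt) : Pt :=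
  fderiv ℝ Y p (X p) - fderiv ℝ X p (Y p)

/-- Partial derivative w.r.t. `t`. -/
def pdt (f : ℝ × ℝ → ℝ) (x : ℝ × ℝ) : ℝ := fderiv ℝ f x (1, 0)
/-- Partial derivative w.r.t. `r`. -/
def pdr (f : ℝ × ℝ → ℝ) (x : ℝ × ℝ) : ℝ := fderiv ℝ f x (0, 1)

def a1 (D : ConnData) (x : ℝ × ℝ) : ℝ :=
  pdr D.k1 x - pdt D.k2 x + D.k3 x * D.k4 x - D.k2 x * D.k6 x
def a2 (D : ConnData) (x : ℝ × ℝ) : ℝ :=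
  pdr D.k2 x - pdt D.k3 x + (D.k2 x) ^ 2 + D.k3 x * D.k6 x - D.k1 x * D.k3 x - D.k2 x * D.k5 x
def a3 (D : ConnData) (x : ℝ × ℝ) : ℝ :=
  pdr D.k4 x - pdt D.k6 x + D.k1 x * D.k6 x + D.k4 x * D.k5 x - D.k2 x * D.k4 x - (D.k6 x) ^ 2
def a4 (D : ConnData) (x : ℝ × ℝ) : ℝ :=
  pdr D.k6 x - pdt D.k5 x + D.k2 x * D.k6 x - D.k3 x * D.k4 x
def a5 (D : ConnData) (x : ℝ × ℝ) : ℝ := pdr D.k8 x - pdt D.k9 x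
def a6 (D : ConnData) (x : ℝ × ℝ) : ℝ :=
  -pdt D.k7 x + D.k7 x * D.k8 x - D.k1 x * D.k7 x - D.k2 x * D.k10 x
def a7 (D : ConnData) (x : ℝ × ℝ) : ℝ :=
  -pdt D.k10 x + D.k8 x * D.k10 x - D.k4 x * D.k7 x - D.k6 x * D.k10 x
def a8 (D : ConnData) (x : ℝ × ℝ) : ℝ :=
  -pdt D.k8 x + D.k1 x * D.k8 x + D.k4 x * D.k9 x - (D.k8 x) ^ 2
def a9 (D : ConnData) (x : ℝ × ℝ) : ℝ :=
  -pdt D.k9 x + D.k2 x * D.k8 x + D.k6 x * D.k9 x - D.k8 x * D.k9 x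
def a10 (D : ConnData) (x : ℝ × ℝ) : ℝ :=
  -pdr D.k7 x + D.k7 x * D.k9 x - D.k2 x * D.k7 x - D.k3 x * D.k10 x
def a11 (D : ConnData) (x : ℝ × ℝ) : ℝ :=
  -pdr D.k10 x + D.k9 x * D.k10 x - D.k6 x * D.k7 x - D.k5 x * D.k10 x
def a12 (D : ConnData) (x : ℝ × ℝ) : ℝ :=
  -pdr D.k8 x + D.k2 x * D.k8 x + D.k6 x * D.k9 x - D.k8 x * D.k9 x
def a13 (D : ConnData) (x : ℝ × ℝ) : ℝ :=
  -pdr D.k9 x + D.k3 x * D.k8 x + D.k5 x * D.k9 x - (D.k9 x) ^ 2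
def a14 (D : ConnData) (x : ℝ × ℝ) : ℝ := 1 + D.k7 x * D.k8 x + D.k9 x * D.k10 x



namespace St16Aux

def mask (S : Finset (Fin 8)) : Pt →L[ℝ] Pt :=
  ContinuousLinearMap.pi (fun i => if i ∈ S then ContinuousLinearMap.proj i else 0)

lemma mask_apply (S : Finset (Fin 8)) (p : Pt) (i : Fin 8) :
    mask S p i = if i ∈ S then p i else 0 := by
  simp only [mask, ContinuousLinearMap.pi_apply]
  split <;> simp

lemma fderiv_mask_zero (Y : Pt → Pt) (P : Pt →L[ℝ] Pt) (p v : Pt)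
    (hYP : ∀ q, Y (P q) = Y q) (hdiff : DifferentiableAt ℝ Y (P p)) (hv : P v = 0) :
    fderiv ℝ Y p v = 0 := by
  have hfun : Y ∘ ⇑P = Y := funext hYP
  have h1 : fderiv ℝ Y p = (fderiv ℝ Y (P p)).comp (fderiv ℝ (⇑P) p) := by
    conv_lhs => rw [← hfun]
    exact fderiv_comp p hdiff P.differentiableAt
  rw [h1, P.fderiv]
  simp [hv]

lemma hIdx0 : hIdx 0 = 0 := rfl
lemma hIdx1 : hIdx 1 = 1 := rfl
lemma hIdx2 : hIdx 2 = 2 := rfl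
lemma hIdx3 : hIdx 3 = 3 := rfl
lemma vIdx0 : vIdx 0 = 4 := rfl
lemma vIdx1 : vIdx 1 = 5 := rfl
lemma vIdx2 : vIdx 2 = 6 := rfl
lemma vIdx3 : vIdx 3 = 7 := rfl

def Sh : Finset (Fin 8) := {0, 1, 4, 5}
def Sa : Finset (Fin 8) := {2, 3, 6, 7}

def Etf (D : ConnData) (p : Pt) : Pt := fun j =>
  if j = 0 then 1
  else if j = 4 then -(D.k1 (p 0, p 1) * p 4 + D.k2 (p 0, p 1) * p 5)
  else if j = 5 then -(D.k4 (p 0, p 1) * p 4 + D.k6 (p 0, p 1) * p 5)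
  else 0

def Erf (D : ConnData) (p : Pt) : Pt := fun j =>
  if j = 1 then 1
  else if j = 4 then -(D.k2 (p 0, p 1) * p 4 + D.k3 (p 0, p 1) * p 5)
  else if j = 5 then -(D.k6 (p 0, p 1) * p 4 + D.k5 (p 0, p 1) * p 5)
  else 0

def Eθf (p : Pt) : Pt := fun j =>
  if j = 2 then 1
  else if j = 7 then -(Real.cos (p 2) / Real.sin (p 2) * p 7)
  else 0

def Eφf (p : Pt) : Pt := fun j =>
  if j = 3 then 1
  else if j = 6 then Real.sin (p 2) * Real.cos (p 2) * p 7
  else if j = 7 then -(Real.cos (p 2) / Real.sin (p 2) * p 6)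
  else 0

variable (D : ConnData)

lemma delta_t_eq (h8 : D.k8 = 0) : δvf D 0 = Etf D := by
  funext p j
  simp only [δvf, Ncoef, Γmat, Fin.sum_univ_four, h8, vIdx0, vIdx1, vIdx2, vIdx3, hIdx0]
  fin_cases j <;>
    simp [Etf, Pi.single, Function.update, Matrix.cons_val_zero,
      Matrix.cons_val_one, Matrix.head_cons, Matrix.cons_val_two, Matrix.cons_val_three,
      Matrix.tail_cons, Matrix.of_apply, Matrix.cons_val', Matrix.empty_val',
      Matrix.vecHead, Matrix.vecTail] <;> ring

lemma delta_r_eq (h9 : D.k9 = 0) : δvf D 1 = Erf D := by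
  funext p j
  simp only [δvf, Ncoef, Γmat, Fin.sum_univ_four, h9, vIdx0, vIdx1, vIdx2, vIdx3, hIdx1]
  fin_cases j <;>
    simp [Erf, Pi.single, Function.update, Matrix.cons_val_zero,
      Matrix.cons_val_one, Matrix.head_cons, Matrix.cons_val_two, Matrix.cons_val_three,
      Matrix.tail_cons, Matrix.of_apply, Matrix.cons_val', Matrix.empty_val',
      Matrix.vecHead, Matrix.vecTail] <;> ring

lemma delta_θ_eq (h7 : D.k7 = 0) (h8 : D.k8 = 0) (h9 : D.k9 = 0) (h10 : D.k10 = 0) :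
    δvf D 2 = Eθf := by
  funext p j
  simp only [δvf, Ncoef, Γmat, Fin.sum_univ_four, h7, h8, h9, h10, vIdx0, vIdx1, vIdx2, vIdx3, hIdx2, hIdx3]
  fin_cases j <;>
    simp [Eθf, Pi.single, Function.update, Matrix.cons_val_zero,
      Matrix.cons_val_one, Matrix.head_cons, Matrix.cons_val_two, Matrix.cons_val_three,
      Matrix.tail_cons, Matrix.of_apply, Matrix.cons_val', Matrix.empty_val',
      Matrix.vecHead, Matrix.vecTail] <;> ring

lemma delta_φ_eq (h7 : D.k7 = 0) (h8 : D.k8 = 0) (h9 : D.k9 = 0) (h10 : D.k10 = 0) :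
    δvf D 3 = Eφf := by
  funext p j
  simp only [δvf, Ncoef, Γmat, Fin.sum_univ_four, h7, h8, h9, h10, vIdx0, vIdx1, vIdx2, vIdx3, hIdx2, hIdx3]
  fin_cases j <;>
    simp [Eφf, Pi.single, Function.update, Matrix.cons_val_zero,
      Matrix.cons_val_one, Matrix.head_cons, Matrix.cons_val_two, Matrix.cons_val_three,
      Matrix.tail_cons, Matrix.of_apply, Matrix.cons_val', Matrix.empty_val',
      Matrix.vecHead, Matrix.vecTail] <;> ring

lemma Etf_mask (q : Pt) : Etf D (mask Sh q) = Etf D q := by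
  funext j; simp [Etf, mask_apply, Sh]

lemma Erf_mask (q : Pt) : Erf D (mask Sh q) = Erf D q := by
  funext j; simp [Erf, mask_apply, Sh]

lemma Eθf_mask (q : Pt) : Eθf (mask Sa q) = Eθf q := by
  funext j; simp [Eθf, mask_apply, Sa]

lemma Eφf_mask (q : Pt) : Eφf (mask Sa q) = Eφf q := by
  funext j; simp [Eφf, mask_apply, Sa]

lemma mask_Sa_Etf (p : Pt) : mask Sa (Etf D p) = 0 := by
  funext i
  rw [mask_apply]
  fin_cases i <;> simp [Sa, Etf]

lemma mask_Sa_Erf (p : Pt) : mask Sa (Erf D p) = 0 := by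
  funext i
  rw [mask_apply]
  fin_cases i <;> simp [Sa, Erf]

lemma mask_Sh_Eθf (p : Pt) : mask Sh (Eθf p) = 0 := by
  funext i
  rw [mask_apply]
  fin_cases i <;> simp [Sh, Eθf]

lemma mask_Sh_Eφf (p : Pt) : mask Sh (Eφf p) = 0 := by
  funext i
  rw [mask_apply]
  fin_cases i <;> simp [Sh, Eφf]

lemma diffAt_coord (i : Fin 8) (q : Pt) : DifferentiableAt ℝ (fun p : Pt => p i) q :=
  (ContinuousLinearMap.proj i : Pt →L[ℝ] ℝ).differentiableAt

lemma diffAt_pair (q : Pt) : DifferentiableAt ℝ (fun p : Pt => (p 0, p 1)) q :=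
  (diffAt_coord 0 q).prodMk (diffAt_coord 1 q)

lemma diffAt_k (k : ℝ × ℝ → ℝ) (hk : ContDiff ℝ (⊤ : ℕ∞) k) (q : Pt) :
    DifferentiableAt ℝ (fun p : Pt => k (p 0, p 1)) q :=
  ((hk.differentiable (by simp)) (q 0, q 1)).comp q (diffAt_pair q)

lemma Etf_diff (hD : D.Smooth) (q : Pt) : DifferentiableAt ℝ (Etf D) q := by
  obtain ⟨hk1, hk2, hk3, hk4, hk5, hk6, -, -, -, -⟩ := hD
  rw [differentiableAt_pi]
  intro j
  fin_cases j <;> simp only [Etf] <;> simp <;>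
    exact (((diffAt_k _ (by assumption) q).mul (diffAt_coord 5 q)).neg.add
      ((diffAt_k _ (by assumption) q).mul (diffAt_coord 4 q)).neg)

lemma Erf_diff (hD : D.Smooth) (q : Pt) : DifferentiableAt ℝ (Erf D) q := by
  obtain ⟨hk1, hk2, hk3, hk4, hk5, hk6, -, -, -, -⟩ := hD
  rw [differentiableAt_pi]
  intro j
  fin_cases j <;> simp only [Erf] <;> simp <;>
    exact (((diffAt_k _ (by assumption) q).mul (diffAt_coord 5 q)).neg.add
      ((diffAt_k _ (by assumption) q).mul (diffAt_coord 4 q)).neg)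

lemma diffAt_sin (q : Pt) : DifferentiableAt ℝ (fun p : Pt => Real.sin (p 2)) q :=
  (Real.differentiable_sin (q 2)).comp (f := fun p : Pt => p 2) q (diffAt_coord 2 q)

lemma diffAt_cos (q : Pt) : DifferentiableAt ℝ (fun p : Pt => Real.cos (p 2)) q :=
  (Real.differentiable_cos (q 2)).comp (f := fun p : Pt => p 2) q (diffAt_coord 2 q)

lemma diffAt_cot (q : Pt) (hs : Real.sin (q 2) ≠ 0) :
    DifferentiableAt ℝ (fun p : Pt => Real.cos (p 2) / Real.sin (p 2)) q :=
  by simp only [div_eq_mul_inv]; exact (diffAt_cos q).mul ((diffAt_sin q).inv hs)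

lemma Eθf_diff (q : Pt) (hs : Real.sin (q 2) ≠ 0) : DifferentiableAt ℝ Eθf q := by
  rw [differentiableAt_pi]
  intro j
  fin_cases j <;> simp only [Eθf] <;> simp
  exact (diffAt_cot q hs).mul (diffAt_coord 7 q)

lemma Eφf_diff (q : Pt) (hs : Real.sin (q 2) ≠ 0) : DifferentiableAt ℝ Eφf q := by
  rw [differentiableAt_pi]
  intro j
  fin_cases j <;> simp only [Eφf] <;> simp
  · exact ((diffAt_sin q).mul (diffAt_cos q)).mul (diffAt_coord 7 q)
  · exact (diffAt_cot q hs).mul (diffAt_coord 6 q)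

lemma mask_Sa_coord2 (p : Pt) : (mask Sa p) 2 = p 2 := by
  rw [mask_apply]; simp [Sa]

end St16Aux

/-- If `k₇ = k₈ = k₉ = k₁₀ = 0`, then the Lie brackets
`[δ_t,δ_θ]`, `[δ_r,δ_θ]`, `[δ_t,δ_φ]`, `[δ_r,δ_φ]` all vanish identically
on the domain `sin θ ≠ 0`. -/
theorem statement_16 (D : ConnData) (hD : D.Smooth)
    (h7 : D.k7 = 0) (h8 : D.k8 = 0) (h9 : D.k9 = 0) (h10 : D.k10 = 0) :
    ∀ p : Pt, Real.sin (p 2) ≠ 0 →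
      lie (δvf D 0) (δvf D 2) p = 0 ∧ lie (δvf D 1) (δvf D 2) p = 0 ∧
      lie (δvf D 0) (δvf D 3) p = 0 ∧ lie (δvf D 1) (δvf D 3) p = 0 := by
  classical
  open St16Aux in
  intro p hs
  have hEt := delta_t_eq D h8
  have hEr := delta_r_eq D h9
  have hEθ := delta_θ_eq D h7 h8 h9 h10
  have hEφ := delta_φ_eq D h7 h8 h9 h10
  have hsa : Real.sin ((mask Sa p) 2) ≠ 0 := by rw [mask_Sa_coord2]; exact hs
  have zθt : fderiv ℝ (Eθf) p (Etf D p) = 0 :=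
    fderiv_mask_zero _ (mask Sa) p _ (Eθf_mask) (Eθf_diff _ hsa) (mask_Sa_Etf D p)
  have ztθ : fderiv ℝ (Etf D) p (Eθf p) = 0 :=
    fderiv_mask_zero _ (mask Sh) p _ (Etf_mask D) (Etf_diff D hD _) (mask_Sh_Eθf p)
  have zθr : fderiv ℝ (Eθf) p (Erf D p) = 0 :=
    fderiv_mask_zero _ (mask Sa) p _ (Eθf_mask) (Eθf_diff _ hsa) (mask_Sa_Erf D p)
  have zrθ : fderiv ℝ (Erf D) p (Eθf p) = 0 :=
    fderiv_mask_zero _ (mask Sh) p _ (Erf_mask D) (Erf_diff D hD _) (mask_Sh_Eθf p)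
  have zφt : fderiv ℝ (Eφf) p (Etf D p) = 0 :=
    fderiv_mask_zero _ (mask Sa) p _ (Eφf_mask) (Eφf_diff _ hsa) (mask_Sa_Etf D p)
  have ztφ : fderiv ℝ (Etf D) p (Eφf p) = 0 :=
    fderiv_mask_zero _ (mask Sh) p _ (Etf_mask D) (Etf_diff D hD _) (mask_Sh_Eφf p)
  have zφr : fderiv ℝ (Eφf) p (Erf D p) = 0 :=
    fderiv_mask_zero _ (mask Sa) p _ (Eφf_mask) (Eφf_diff _ hsa) (mask_Sa_Erf D p)
  have zrφ : fderiv ℝ (Erf D) p (Eφf p) = 0 :=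
    fderiv_mask_zero _ (mask Sh) p _ (Erf_mask D) (Erf_diff D hD _) (mask_Sh_Eφf p)
  refine ⟨?_, ?_, ?_, ?_⟩ <;>
    simp [lie, hEt, hEr, hEθ, hEφ, zθt, ztθ, zθr, zrθ, zφt, ztφ, zφr, zrφ]


end
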